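/- Let b_0 = 1 and let b_1,…,b_d be nonzero real numbers with b_d > 0, and set a_k = b_k/|b_{k−1}| for 1 ≤ k ≤ d. Then g_d(b_1,…,b_d) = f_d(b_1, b_2/b_1, …, b_d/b_{d−1}) = sign(∏_{i=1}^{d} b_i) · Σ_{s_1=1}^{ā_1} Σ_{s_2=1}^{ \overline{a_2 s_1} } ⋯ Σ_{s_d=1}^{ \overline{a_d s_{d−1}} } 1, where each index s_i runs over positive integers, and for positive s the bar is interpreted by \overline{a s} = a s if a > 0 and \overline{a s} = −a s − 1 if a < 0. -/

import Mathlib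

open MeasureTheory Polynomial

noncomputable section

/-- The lattice points of `ℝ^d`: points all of whose coordinates are integers. -/
def latticePts (d : ℕ) : Set (Fin d → ℝ) := {x | ∀ i, ∃ n : ℤ, x i = (n : ℝ)}

/-- The projection `π^{(d-k)} : ℝ^d → ℝ^k` forgetting the last `d - k` coordinates
(for `k ≤ d`; junk value `0` in out-of-range coordinates otherwise). -/
def projTo (d k : ℕ) (x : Fin d → ℝ) : Fin k → ℝ :=
  fun i => if h : (i : ℕ) < d then x ⟨(i : ℕ), h⟩ else 0

/-- A polytope with vertex set `V ⊆ ℝ^d` is a lattice-face polytope if for every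
`0 ≤ k ≤ d-1` and every `(k+1)`-subset `U ⊆ V`, `π^{(d-k)}(aff(U) ∩ ℤ^d) = ℤ^k`. -/
def IsLatticeFace (d : ℕ) (V : Finset (Fin d → ℝ)) : Prop :=
  ∀ k : ℕ, k < d → ∀ U : Finset (Fin d → ℝ), U ⊆ V → U.card = k + 1 →
    projTo d k '' ((affineSpan ℝ (U : Set (Fin d → ℝ)) : Set (Fin d → ℝ)) ∩ latticePts d)
      = latticePts k

/-- The last coordinate of a point of `ℝ^d`. -/
def lastCoord (d : ℕ) (x : Fin d → ℝ) : ℝ :=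
  if h : 0 < d then x ⟨d - 1, by omega⟩ else 0

/-- The negative boundary `NB(P)`: points of `P` minimizing the last coordinate in
their fiber over `π(P)`. -/
def NB (d : ℕ) (P : Set (Fin d → ℝ)) : Set (Fin d → ℝ) :=
  {x | x ∈ P ∧ ∀ y ∈ P, projTo d (d - 1) y = projTo d (d - 1) x → lastCoord d x ≤ lastCoord d y}

/-- The positive boundary `PB(P)`: points of `P` maximizing the last coordinate in
their fiber over `π(P)`. -/
def PB (d : ℕ) (P : Set (Fin d → ℝ)) : Set (Fin d → ℝ) :=
  {x | x ∈ P ∧ ∀ y ∈ P, projTo d (d - 1) y = projTo d (d - 1) x → lastCoord d y ≤ lastCoord d x}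

/-- `i(P,m)`: the number of lattice points in the dilate `mP`. -/
def ehr (d : ℕ) (P : Set (Fin d → ℝ)) (m : ℕ) : ℕ :=
  (latticePts d ∩ (fun x => (m : ℝ) • x) '' P).ncard

/-- `î(P,m)`: the number of lattice points in the interior of the dilate `mP`. -/
def intEhr (d : ℕ) (P : Set (Fin d → ℝ)) (m : ℕ) : ℕ :=
  (latticePts d ∩ interior ((fun x => (m : ℝ) • x) '' P)).ncard

/-- The `j`-th coordinate (`0`-indexed) of a point of `ℝ^d`, junk value `0` if `j ≥ d`. -/
def coordN {d : ℕ} (w : Fin d → ℝ) (j : ℕ) : ℝ := if h : j < d then w ⟨j, h⟩ else 0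

/-- The vertex occurring in row `p` (0-indexed) of the matrices `X(σ,k)`, `Y(σ,k)`:
vertex `v_{σ(p+1)}` for `p < k`, and `v_{d+1}` for the last row of `X(σ,k)`. -/
def rowVert (d : ℕ) (v : Fin (d + 1) → Fin d → ℝ) (σ : Equiv.Perm (Fin d)) (k p : ℕ) :
    Fin d → ℝ :=
  if h : p < k ∧ p < d then v (Fin.castSucc (σ ⟨p, h.2⟩)) else v (Fin.last d)

/-- The matrix `X(σ,k)` with rows `(1, x_{σ(i),1},…,x_{σ(i),k})` for `1 ≤ i ≤ k`
followed by `(1, x_{d+1,1},…,x_{d+1,k})`. -/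
def Xmat (d : ℕ) (v : Fin (d + 1) → Fin d → ℝ) (σ : Equiv.Perm (Fin d)) (k : ℕ) :
    Matrix (Fin (k + 1)) (Fin (k + 1)) ℝ :=
  Matrix.of fun p q =>
    if (q : ℕ) = 0 then 1 else coordN (rowVert d v σ k (p : ℕ)) ((q : ℕ) - 1)

/-- The matrix `Y(σ,k)` with rows `(1, x_{σ(i),1},…,x_{σ(i),k-1})` for `1 ≤ i ≤ k`. -/
def Ymat (d : ℕ) (v : Fin (d + 1) → Fin d → ℝ) (σ : Equiv.Perm (Fin d)) (k : ℕ) :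
    Matrix (Fin k) (Fin k) ℝ :=
  Matrix.of fun p q =>
    if (q : ℕ) = 0 then 1 else coordN (rowVert d v σ k (p : ℕ)) ((q : ℕ) - 1)

/-- The matrix `X̃(σ,k;x)`: `X(σ,k)` with its last row replaced by `(1, x_1,…,x_k)`. -/
def Xtil (d : ℕ) (v : Fin (d + 1) → Fin d → ℝ) (σ : Equiv.Perm (Fin d)) (k : ℕ)
    (x : Fin d → ℝ) : Matrix (Fin (k + 1)) (Fin (k + 1)) ℝ :=
  Matrix.of fun p q =>
    if (q : ℕ) = 0 then 1
    else if (p : ℕ) < k then coordN (rowVert d v σ k (p : ℕ)) ((q : ℕ) - 1)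
    else coordN x ((q : ℕ) - 1)

/-- `z(σ,k) = det X(σ,k) / det Y(σ,k)`; note `z(σ,0) = 1`. -/
def zc (d : ℕ) (v : Fin (d + 1) → Fin d → ℝ) (σ : Equiv.Perm (Fin d)) (k : ℕ) : ℝ :=
  (Xmat d v σ k).det / (Ymat d v σ k).det

/-- The minor `m(σ,k;j)` of `X̃(σ,k;x)` obtained by deleting the last row and the
`(j+1)`-st column (it does not depend on `x`). -/
def minorM (d : ℕ) (v : Fin (d + 1) → Fin d → ℝ) (σ : Equiv.Perm (Fin d)) (k j : ℕ) : ℝ :=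
  (Matrix.of fun p q : Fin k =>
    Xmat d v σ k (Fin.castSucc p) (if (q : ℕ) < j + 1 then Fin.castSucc q else q.succ)).det

/-- A `d`-simplex with vertices `v_1, …, v_{d+1}` is in general position if its vertices
are affinely independent and for every `0 ≤ k ≤ d-1` and every `(k+1)`-subset `U` of the
vertex set, `π^{(d-k)}(conv U)` is a `k`-simplex. -/
def SimplexGenPos (d : ℕ) (v : Fin (d + 1) → Fin d → ℝ) : Prop :=
  AffineIndependent ℝ v ∧
    ∀ k : ℕ, k < d → ∀ U : Finset (Fin (d + 1)), U.card = k + 1 →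
      affineSpan ℝ (projTo d k '' (v '' (U : Set (Fin (d + 1))))) = ⊤

/-- A lattice-face `d`-simplex, given by its `d+1` affinely independent vertices. -/
def SimplexLatticeFace (d : ℕ) (v : Fin (d + 1) → Fin d → ℝ) : Prop :=
  AffineIndependent ℝ v ∧
    ∀ k : ℕ, k < d → ∀ U : Finset (Fin (d + 1)), U.card = k + 1 →
      projTo d k ''
          ((affineSpan ℝ (v '' (U : Set (Fin (d + 1)))) : Set (Fin d → ℝ)) ∩ latticePts d)
        = latticePts k

open scoped Classical in
/-- The sign of a facet `F` of `P`: `+1` if `F` has a relative-interior point on the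
positive boundary, `-1` if on the negative boundary, `0` otherwise. -/
def facetSign (d : ℕ) (P F : Set (Fin d → ℝ)) : ℝ :=
  if ∃ x ∈ intrinsicInterior ℝ F, x ∈ PB d P then 1
  else if ∃ x ∈ intrinsicInterior ℝ F, x ∈ NB d P then -1
  else 0

/-- The Bernoulli polynomial `B_n(x)`, as a real polynomial. -/
def bernR (n : ℕ) : Polynomial ℝ := (Polynomial.bernoulli n).map (algebraMap ℚ ℝ)

/-- The `k`-th power sum polynomial `P_k(x) = (B_{k+1}(x+1) - B_{k+1}(0))/(k+1)`. -/
def PkR (k : ℕ) : Polynomial ℝ :=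
  Polynomial.C (((k : ℝ) + 1)⁻¹) *
    ((bernR (k + 1)).comp (Polynomial.X + 1) - Polynomial.C ((bernR (k + 1)).eval 0))

/-- The extension of the summation operation: for a polynomial `h(s) = Σ_k h_k s^k`,
`Σ_{s=1}^{u} h := h_0 u + Σ_{k ≥ 1} h_k P_k(u)`, as a polynomial in the upper bound `u`. -/
def extSumPoly (h : Polynomial ℝ) : Polynomial ℝ :=
  Polynomial.C (h.coeff 0) * Polynomial.X +
    ∑ k ∈ Finset.Icc 1 h.natDegree, Polynomial.C (h.coeff k) * PkR k

/-- `fdPoly n a` is the polynomial (in the first variable `a_1`) expressing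
`f_{n+1}(a_1, a 0, a 1, …)`, defined recursively by `f_1(a_1) = a_1` and
`f_d(a_1,…,a_d) = Σ_{s=1}^{a_1} f_{d-1}(a_2 s, a_3, …, a_d)` using the extended sum. -/
def fdPoly : ℕ → (ℕ → ℝ) → Polynomial ℝ
  | 0, _ => Polynomial.X
  | n + 1, a =>
      extSumPoly ((fdPoly n (fun i => a (i + 1))).comp (Polynomial.C (a 0) * Polynomial.X))

/-- `f_d(a_1, …, a_d)` where `a_k = a (k-1)` (0-indexed). -/
def fd (d : ℕ) (a : ℕ → ℝ) : ℝ := (fdPoly (d - 1) (fun i => a (i + 1))).eval (a 0)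

/-- `g_d(b_1, …, b_d) = f_d(b_1/b_0, b_2/b_1, …, b_d/b_{d-1})` where `b_k = b k` and
`b 0 = 1` by convention. -/
def gd (d : ℕ) (b : ℕ → ℝ) : ℝ := fd d (fun i => b (i + 1) / b i)

/-- `x̄` for an integer: `x̄ = x` if `x ≥ 0` and `x̄ = -x-1` if `x < 0`. -/
def barNat (n : ℤ) : ℕ := if 0 ≤ n then n.toNat else (-n - 1).toNat

/-- The half-open segment `Ω(conv(0,x))`: `(0,x]` if `x ≥ 0` and `(x,0]` if `x < 0`. -/
def hoSeg (x : ℝ) : Set ℝ := if 0 ≤ x then Set.Ioc 0 x else Set.Ioc x 0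

/-- The previous coordinate `s_{k-1}` of a point `s ∈ ℝ^d`, with `s_0 = 1`. -/
def sPrev (d : ℕ) (s : Fin d → ℝ) (k : Fin d) : ℝ :=
  if (k : ℕ) = 0 then 1 else s ⟨(k : ℕ) - 1, lt_of_le_of_lt (Nat.sub_le _ _) k.isLt⟩

/-- The nested sum `Σ_{s_1=1}^{⌊a_1 sp⌋¯} Σ_{s_2=1}^{⌊a_2 s_1⌋¯} ⋯ 1` over positive
integers. -/
def nestedCount : ℕ → (ℕ → ℝ) → ℕ → ℕ
  | 0, _, _ => 1
  | n + 1, a, sp =>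
      ∑ s ∈ Finset.Icc 1 (barNat ⌊a 0 * (sp : ℝ)⌋), nestedCount n (fun i => a (i + 1)) s

/-- The nested extended sum `Σ_{s_1=1}^{\bar{a_1 s_0}} ⋯ Σ_{s_d=1}^{\bar{a_d s_{d-1}}} 1`,
as a polynomial in `s_0`, where for positive `s` the bar is `a s` if `a > 0` and
`-a s - 1` if `a < 0`. -/
def barNested : ℕ → (ℕ → ℝ) → Polynomial ℝ
  | 0, _ => 1
  | n + 1, a =>
      (extSumPoly (barNested n (fun i => a (i + 1)))).comp
        (if 0 < a 0 then Polynomial.C (a 0) * Polynomial.X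
         else -(Polynomial.C (a 0) * Polynomial.X) - 1)

/-- Row vertex for the hat matrices: `v_{σ(p+1)}` for `p < d`. -/
def rowVert' (d : ℕ) (v : Fin (d + 1) → Fin d → ℝ) (σ : Equiv.Perm (Fin d)) (p : ℕ) :
    Fin d → ℝ :=
  if h : p < d then v (Fin.castSucc (σ ⟨p, h⟩)) else v (Fin.last d)

/-- The matrix `X̂(σ,k)` with entries `x̂_{σ(p),q} = x_{σ(p),q} - x_{d+1,q}`. -/
def XhatM (d : ℕ) (v : Fin (d + 1) → Fin d → ℝ) (σ : Equiv.Perm (Fin d)) (k : ℕ) :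
    Matrix (Fin k) (Fin k) ℝ :=
  Matrix.of fun p q =>
    coordN (rowVert' d v σ (p : ℕ)) (q : ℕ) - coordN (v (Fin.last d)) (q : ℕ)

/-- The matrix `Ŷ(σ,k)` with rows `(1, x̂_{σ(p),1},…,x̂_{σ(p),k-1})`. -/
def YhatM (d : ℕ) (v : Fin (d + 1) → Fin d → ℝ) (σ : Equiv.Perm (Fin d)) (k : ℕ) :
    Matrix (Fin k) (Fin k) ℝ :=
  Matrix.of fun p q =>
    if (q : ℕ) = 0 then 1
    else coordN (rowVert' d v σ (p : ℕ)) ((q : ℕ) - 1) - coordN (v (Fin.last d)) ((q : ℕ) - 1)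

/-- `ẑ(σ,k) = det X̂(σ,k) / det Ŷ(σ,k)`. -/
def zhat (d : ℕ) (v : Fin (d + 1) → Fin d → ℝ) (σ : Equiv.Perm (Fin d)) (k : ℕ) : ℝ :=
  (XhatM d v σ k).det / (YhatM d v σ k).det

end

/-!
The extended sum `S = Σ_{s=1}^{u} h` is the unique polynomial with `S(0) = 0` and
`S(u) - S(u-1) = h(u)`. Uniqueness gives the reflection rule
`Σ_{s=1}^{u} h(-s) = -Σ_{s=1}^{-u-1} h(s) - h(0)`, and `h(0) = 0` for every inner nested
sum, because the innermost ratio `b_d / |b_{d-1}|` is positive. Peeling off the outer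
summation, a negative ratio `b_k / b_{k-1}` is thus traded for the substitution
`s ↦ -a s - 1` and a factor `-1`; these factors multiply up to `sign(∏ b_i)`.
-/

theorem Real.sign_eq_coe_sign (x : ℝ) : Real.sign x = (SignType.sign x : ℝ) := by
  rcases lt_trichotomy x 0 with hx | rfl | hx
  · simp [Real.sign_of_neg hx, hx]
  · simp [Real.sign_zero]
  · simp [Real.sign_of_pos hx, hx]

theorem Real.sign_mul (x y : ℝ) : Real.sign (x * y) = Real.sign x * Real.sign y := by
  simp only [Real.sign_eq_coe_sign, _root_.sign_mul, SignType.coe_mul]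

theorem Polynomial.eq_C_eval_zero_of_comp_X_sub_one {R : Type*} [CommRing R] [IsDomain R]
    [CharZero R] {p : R[X]} (hp : p.comp (X - 1) = p) : p = C (p.eval 0) := by
  have eval_natCast : ∀ n : ℕ, p.eval (n : R) = p.eval 0 := by
    intro n
    induction n with
    | zero => simp
    | succ n ih =>
      conv_lhs => rw [← hp]
      simp [ih]
  refine eq_of_infinite_eval_eq _ _ ((Set.infinite_range_of_injective Nat.cast_injective).mono ?_)
  rintro x ⟨n, rfl⟩
  simp [eval_natCast n]

theorem bernR_comp_X_add_one (n : ℕ) :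
    (bernR n).comp (X + 1) = bernR n + C (n : ℝ) * X ^ (n - 1) := by
  have h : (Polynomial.bernoulli n).comp (X + 1) =
      Polynomial.bernoulli n + C (n : ℚ) * X ^ (n - 1) :=
    Polynomial.funext fun x => by simp [add_comm x 1, Polynomial.bernoulli_eval_one_add]
  simpa [bernR, Polynomial.map_comp] using congrArg (Polynomial.map (algebraMap ℚ ℝ)) h

theorem bernR_eval_one {n : ℕ} (hn : n ≠ 1) : (bernR n).eval 1 = (bernR n).eval 0 := by
  simp only [bernR, eval_one_map, eval_zero_map, Polynomial.bernoulli_eval_one,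
    Polynomial.bernoulli_eval_zero, bernoulli_eq_bernoulli'_of_ne_one hn]

theorem PkR_sub_comp_X_sub_one (k : ℕ) : PkR k - (PkR k).comp (X - 1) = X ^ k := by
  have hXk : ((bernR (k + 1)).comp (X + 1)).comp (X - 1) = bernR (k + 1) := by
    rw [comp_assoc]; simp
  have hk : C ((k : ℝ) + 1)⁻¹ * C ((k + 1 : ℕ) : ℝ) = 1 := by
    rw [← C_mul, ← C_1]
    push_cast
    rw [inv_mul_cancel₀ (by positivity)]
  rw [PkR, mul_comp, C_comp, sub_comp, C_comp, hXk, bernR_comp_X_add_one, Nat.add_sub_cancel]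
  linear_combination X ^ k * hk

theorem PkR_eval_zero {k : ℕ} (hk : k ≠ 0) : (PkR k).eval 0 = 0 := by
  simp [PkR, bernR_eval_one (show k + 1 ≠ 1 by omega)]

theorem extSumPoly_sub_comp_X_sub_one (h : ℝ[X]) :
    extSumPoly h - (extSumPoly h).comp (X - 1) = h := by
  have hsplit : h = C (h.coeff 0) + ∑ k ∈ Finset.Icc 1 h.natDegree, C (h.coeff k) * X ^ k := by
    conv_lhs => rw [h.as_sum_range_C_mul_X_pow, Finset.range_eq_Ico,
      Finset.sum_eq_sum_Ico_succ_bot (Nat.succ_pos _), Nat.succ_eq_add_one,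
      Finset.Ico_add_one_right_eq_Icc]
    simp
  rw [extSumPoly, add_comp, sum_comp]
  conv_rhs => rw [hsplit]
  simp only [mul_comp, C_comp, X_comp]
  rw [add_sub_add_comm, ← Finset.sum_sub_distrib]
  congr 1
  · ring
  · refine Finset.sum_congr rfl fun k _ => ?_
    rw [← mul_sub, PkR_sub_comp_X_sub_one]

theorem eval_zero_extSumPoly (h : ℝ[X]) : (extSumPoly h).eval 0 = 0 := by
  rw [extSumPoly, eval_add, eval_finsetSum]
  simp only [eval_mul, eval_C, eval_X, mul_zero, zero_add]
  refine Finset.sum_eq_zero fun k hk => ?_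
  rw [PkR_eval_zero (Nat.one_le_iff_ne_zero.mp (Finset.mem_Icc.mp hk).1), mul_zero]

theorem eq_extSumPoly_of_sub_comp_X_sub_one {p h : ℝ[X]} (hp0 : p.eval 0 = 0)
    (hp : p - p.comp (X - 1) = h) : p = extSumPoly h := by
  set q := p - extSumPoly h
  have hq : q.comp (X - 1) = q := by
    have := extSumPoly_sub_comp_X_sub_one h
    simp only [q, sub_comp]
    linear_combination this - hp
  have hq0 : q.eval 0 = 0 := by simp [q, hp0, eval_zero_extSumPoly]
  rw [← sub_eq_zero, ← C_0, ← hq0]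
  exact eq_C_eval_zero_of_comp_X_sub_one hq

theorem extSumPoly_C_mul (c : ℝ) (h : ℝ[X]) : extSumPoly (C c * h) = C c * extSumPoly h := by
  refine (eq_extSumPoly_of_sub_comp_X_sub_one ?_ ?_).symm
  · simp [eval_zero_extSumPoly]
  · rw [mul_comp, C_comp, ← mul_sub, extSumPoly_sub_comp_X_sub_one]

theorem eval_neg_one_extSumPoly (h : ℝ[X]) : (extSumPoly h).eval (-1) = -h.eval 0 := by
  have := congrArg (eval 0) (extSumPoly_sub_comp_X_sub_one h)
  simp only [eval_sub, eval_comp, eval_X, eval_one, zero_sub, eval_zero_extSumPoly] at this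
  linarith

theorem extSumPoly_comp_neg_X (h : ℝ[X]) :
    extSumPoly (h.comp (-X)) = -(extSumPoly h).comp (-X - 1) - C (h.eval 0) := by
  refine (eq_extSumPoly_of_sub_comp_X_sub_one ?_ ?_).symm
  · simp [eval_neg_one_extSumPoly]
  · have := congrArg (comp · (-X)) (extSumPoly_sub_comp_X_sub_one h)
    simp only [sub_comp, neg_comp, C_comp, comp_assoc, X_comp, one_comp] at this ⊢
    rw [show -(X - 1 : ℝ[X]) - 1 = -X by ring, ← this]
    ring

theorem extSumPoly_one : extSumPoly 1 = X :=
  (eq_extSumPoly_of_sub_comp_X_sub_one (by simp) (by simp)).symm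

theorem extSumPoly_comp_sign_mul_X {c : ℝ} (hc : c ≠ 0) {h : ℝ[X]} (h0 : h.eval 0 = 0) :
    extSumPoly (h.comp (C (Real.sign c) * X)) =
      C (Real.sign c) * (extSumPoly h).comp (if 0 < c then X else -X - 1) := by
  rcases hc.lt_or_gt with hc | hc
  · rw [Real.sign_of_neg hc, if_neg hc.not_gt, C_neg, C_1, neg_one_mul, extSumPoly_comp_neg_X,
      h0, C_0, sub_zero, neg_one_mul]
  · rw [Real.sign_of_pos hc, if_pos hc, C_1, one_mul, comp_X, comp_X, one_mul]

noncomputable def barLin (a : ℝ) : ℝ[X] := if 0 < a then C a * X else -(C a * X) - 1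

theorem barNested_succ (n : ℕ) (a : ℕ → ℝ) :
    barNested (n + 1) a = (extSumPoly (barNested n (fun i => a (i + 1)))).comp (barLin (a 0)) :=
  rfl

theorem eval_zero_barNested (n : ℕ) (a : ℕ → ℝ) (ha : 0 < a n) :
    (barNested (n + 1) a).eval 0 = 0 := by
  induction n generalizing a with
  | zero =>
    simp [barNested, if_pos ha, eval_zero_extSumPoly]
  | succ n ih =>
    rw [barNested_succ, eval_comp, barLin]
    split_ifs
    · simp [eval_zero_extSumPoly]
    · simp [eval_neg_one_extSumPoly, ih (fun i => a (i + 1)) ha]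

theorem barLin_div_abs_comp_sign_mul_X {b₀ : ℝ} (hb₀ : b₀ ≠ 0) (b₁ : ℝ) :
    (barLin (b₁ / |b₀|)).comp (C (Real.sign b₀) * X) =
      (if 0 < b₁ then X else -X - 1).comp (C (b₁ / b₀) * X) := by
  have hcoeff : b₁ / |b₀| * Real.sign b₀ = b₁ / b₀ := by
    rcases hb₀.lt_or_gt with h | h
    · rw [abs_of_neg h, Real.sign_of_neg h, div_neg, neg_mul_neg, mul_one]
    · rw [abs_of_pos h, Real.sign_of_pos h, mul_one]
  have hpos : 0 < b₁ / |b₀| ↔ 0 < b₁ := div_pos_iff_of_pos_right (abs_pos.2 hb₀)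
  simp only [barLin, hpos]
  split_ifs <;> simp [mul_comp, ← mul_assoc, ← C_mul, hcoeff]

/-- Stated for an arbitrary nonzero `b 0`, so that the induction can drop `b 0` and shift `b`. -/
theorem fdPoly_comp_eq_sign_mul_barNested (n : ℕ) (b : ℕ → ℝ) (hb : ∀ i ≤ n, b i ≠ 0)
    (hbn : 0 < b (n + 1)) :
    (fdPoly n (fun i => b (i + 2) / b (i + 1))).comp (C (b 1 / b 0) * X) =
      C (Real.sign (∏ i ∈ Finset.range (n + 1), b (i + 1))) *
        (barNested (n + 1) (fun i => b (i + 1) / |b i|)).comp (C (Real.sign (b 0)) * X) := by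
  induction n generalizing b with
  | zero =>
    rw [Finset.prod_range_one, Real.sign_of_pos hbn, C_1, one_mul, barNested_succ, barNested,
      extSumPoly_one, X_comp, barLin_div_abs_comp_sign_mul_X (hb 0 le_rfl),
      if_pos hbn, X_comp, fdPoly, X_comp]
  | succ n ih =>
    have hb₀ := hb 0 (Nat.zero_le _)
    have hb₁ := hb 1 (by omega)
    set B := barNested (n + 1) (fun i => b (i + 2) / |b (i + 1)|)
    have hB : B.eval 0 = 0 := eval_zero_barNested n _ (div_pos hbn (abs_pos.2 (hb _ le_rfl)))
    have ih' : (fdPoly n (fun i => b (i + 3) / b (i + 2))).comp (C (b 2 / b 1) * X) =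
        C (Real.sign (∏ i ∈ Finset.range (n + 1), b (i + 2))) *
          B.comp (C (Real.sign (b 1)) * X) :=
      ih (fun i => b (i + 1)) (fun i hi => hb (i + 1) (by omega)) hbn
    calc (fdPoly (n + 1) (fun i => b (i + 2) / b (i + 1))).comp (C (b 1 / b 0) * X)
        = (extSumPoly ((fdPoly n (fun i => b (i + 3) / b (i + 2))).comp
            (C (b 2 / b 1) * X))).comp (C (b 1 / b 0) * X) := rfl
      _ = C (Real.sign (∏ i ∈ Finset.range (n + 1), b (i + 2)) * Real.sign (b 1)) *
            ((extSumPoly B).comp (if 0 < b 1 then X else -X - 1)).comp (C (b 1 / b 0) * X) := by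
        rw [ih', extSumPoly_C_mul, extSumPoly_comp_sign_mul_X hb₁ hB, ← mul_assoc, ← C_mul,
          mul_comp, C_comp]
      _ = _ := by
        rw [Finset.prod_range_succ' (fun i => b (i + 1)), Real.sign_mul, comp_assoc,
          ← barLin_div_abs_comp_sign_mul_X hb₀, ← comp_assoc, barNested_succ (n + 1)]

theorem gd_eq_sign_mul_barSum
    (d : ℕ) (hd : 1 ≤ d) (b : ℕ → ℝ) (hb0 : b 0 = 1)
    (hbne : ∀ k, 1 ≤ k → k ≤ d → b k ≠ 0) (hbd : 0 < b d) :
    gd d b = fd d (fun i => b (i + 1) / b i)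
      ∧ gd d b = Real.sign (∏ i ∈ Finset.Icc 1 d, b i)
          * (barNested d (fun i => b (i + 1) / |b i|)).eval 1 := by
  refine ⟨rfl, ?_⟩
  obtain ⟨n, rfl⟩ : ∃ n, d = n + 1 := ⟨d - 1, by omega⟩
  have hb : ∀ i ≤ n, b i ≠ 0 := fun i hi => by
    rcases i with _ | i
    · simp [hb0]
    · exact hbne _ (by omega) (by omega)
  have hprod : ∏ i ∈ Finset.Icc 1 (n + 1), b i = ∏ i ∈ Finset.range (n + 1), b (i + 1) := by
    rw [← Finset.Ico_add_one_right_eq_Icc, Finset.prod_Ico_eq_prod_range]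
    simp [add_comm]
  have key := congrArg (eval 1) (fdPoly_comp_eq_sign_mul_barNested n b hb hbd)
  simp only [eval_comp, eval_mul, eval_C, eval_X, mul_one, hb0, Real.sign_one] at key
  rw [hprod, ← key]
  simp [gd, fd, hb0]
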